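/- Fix a distribution P over a countable measurable space X and a convex set A of probability distributions on X with P(P̂_n ∈ A) > 0. Let P*_A be an I-projection of P on A, i.e. P*_A ∈ argmin_{Q ∈ A} D(Q‖P). Then − D(ω_A ‖ P) ≤ − D(P*_A ‖ P); that is, D(P*_A ‖ P) ≤ D(ω_A ‖ P). Consequently (1/n) · ln P(P̂_n ∈ A) ≤ − D(P*_A ‖ P). -/

import Mathlib

open scoped ENNReal

/-- Relative entropy (KL divergence) `D(Q ‖ R) = E_{y ∼ Q}[ln (Q y / R y)]`
for PMFs on a countable type. -/
noncomputable def klDiv {Y : Type*} (Q R : PMF Y) : ℝ :=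
  ∑' y, (Q y).toReal * Real.log ((Q y).toReal / (R y).toReal)

/-- Cross entropy `H(Q, P) = E_{y ∼ Q}[ln (1 / P y)]`. -/
noncomputable def crossEnt {Y : Type*} (Q P : PMF Y) : ℝ :=
  ∑' y, (Q y).toReal * Real.log (1 / (P y).toReal)

/-- Entropy `H(Q) = E_{y ∼ Q}[ln (1 / Q y)]`. -/
noncomputable def ent {Y : Type*} (Q : PMF Y) : ℝ :=
  ∑' y, (Q y).toReal * Real.log (1 / (Q y).toReal)

/-- The `n`-fold product distribution `P^n` on `X^n`, assigning to each
`y ∈ X^n` the probability `∏ i, P (y i)`. -/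
noncomputable def piPMF {X : Type*} (n : ℕ) (P : PMF X) : PMF (Fin n → X) :=
  ⟨fun y => ∏ i, P (y i), by
    rw [Summable.hasSum_iff ENNReal.summable]
    induction n with
    | zero =>
      rw [tsum_eq_single (default : Fin 0 → X)
        (fun b hb => absurd (Subsingleton.elim b default) hb)]
      simp
    | succ n ih =>
      rw [← (Fin.consEquiv (fun _ : Fin (n+1) => X)).tsum_eq, ENNReal.tsum_prod']
      simp only [Fin.consEquiv_apply, Fin.prod_univ_succ, Fin.cons_zero, Fin.cons_succ]
      simp_rw [ENNReal.tsum_mul_left, ih, mul_one]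
      exact P.tsum_coe⟩

/-- The empirical measure `μ̂_Z` of a sample `Z ∈ X^n`: it assigns probability
`(1/n) · #{i : Z i = u}` to each point `u`, i.e. it is the pushforward of the
uniform distribution on `Fin n` along `Z`. -/
noncomputable def empiricalPMF {X : Type*} (n : ℕ) [NeZero n] (Z : Fin n → X) : PMF X :=
  (PMF.uniformOfFintype (Fin n)).map Z

/-- `P(P̂_n ∈ A)`: the probability, under an i.i.d. sample `Z ∼ P^n`, that the
empirical measure `μ̂_Z` lies in the set `A` of distributions. -/
noncomputable def probIn {X : Type*} (n : ℕ) [NeZero n] (P : PMF X) (A : Set (PMF X)) : ℝ≥0∞ :=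
  (piPMF n P).toOuterMeasure {Z | empiricalPMF n Z ∈ A}

/-- The convex combination `lam • Q₁ + (1 - lam) • Q₂` of two PMFs. -/
noncomputable def mixPMF {Y : Type*} (lam : ℝ≥0∞) (hlam : lam ≤ 1) (Q₁ Q₂ : PMF Y) : PMF Y :=
  ⟨fun y => lam * Q₁ y + (1 - lam) * Q₂ y, by
    rw [Summable.hasSum_iff ENNReal.summable,
      ENNReal.tsum_add, ENNReal.tsum_mul_left,
      ENNReal.tsum_mul_left, Q₁.tsum_coe, Q₂.tsum_coe, mul_one, mul_one,
      add_tsub_cancel_of_le hlam]⟩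

/-- A set of PMFs is convex if it is closed under convex combinations. -/
def IsConvexPMFSet {Y : Type*} (A : Set (PMF Y)) : Prop :=
  ∀ Q₁ ∈ A, ∀ Q₂ ∈ A, ∀ (lam : ℝ≥0∞) (hlam : lam ≤ 1), mixPMF lam hlam Q₁ Q₂ ∈ A

/-!
Conditioned on `μ̂_Z ∈ A`, the sample has density at most `1 / P(P̂_n ∈ A)` with respect to `Pⁿ`.
All its one-dimensional marginals equal `ω_A`, so comparing it with `ω_Aⁿ` through
`x - y ≤ x ln (x / y)` gives `n · D(ω_A ‖ P) ≤ -ln P(P̂_n ∈ A)`; in particular the series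
defining `D(ω_A ‖ P)` converges.

On the other hand `ω_A` is the average of the empirical measures `μ̂_Z`, each of which lies in `A`.
Its normalised finite truncations are finite convex combinations, hence lie in `A`, and they converge
to `ω_A` while staying below `2 ω_A`; dominated convergence then gives `D(P*_A ‖ P) ≤ D(ω_A ‖ P)`.
-/

open Filter Topology

namespace Real

variable {x y p : ℝ}

theorem continuous_mul_log_div (p : ℝ) : Continuous fun x => x * log (x / p) := by
  have h : (fun x => x * log (x / p)) = fun x => p * (x / p * log (x / p)) := by
    funext x
    rcases eq_or_ne p 0 with rfl | hp
    · simp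
    · rw [← mul_assoc, mul_div_cancel₀ x hp]
  rw [h]
  exact continuous_const.mul (continuous_mul_log.comp (continuous_id.div_const p))

theorem sub_le_mul_log_div (hx : 0 ≤ x) (hp : 0 < p) : x - p ≤ x * log (x / p) := by
  rcases hx.eq_or_lt with rfl | hx
  · simpa using hp.le
  have h := mul_le_mul_of_nonneg_left (log_le_sub_one_of_pos (div_pos hp hx)) hx.le
  rw [← inv_div, log_inv, inv_div, mul_sub, mul_div_cancel₀ p hx.ne', mul_one] at h
  linarith

theorem neg_le_mul_log_div (hx : 0 ≤ x) (hp : 0 ≤ p) : -p ≤ x * log (x / p) := by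
  rcases hp.eq_or_lt with rfl | hp
  · simp
  · linarith [sub_le_mul_log_div hx hp]

theorem mul_log_div_le_max_of_le (hx : 0 ≤ x) (hxy : x ≤ y) (hp : 0 ≤ p) :
    x * log (x / p) ≤ max (y * log (y / p)) 0 := by
  by_cases hlog : log (x / p) ≤ 0
  · exact (mul_nonpos_of_nonneg_of_nonpos hx hlog).trans (le_max_right _ _)
  push Not at hlog
  have hxp : 1 < x / p := (log_pos_iff (div_nonneg hx hp)).1 hlog
  have hp : 0 < p := hp.lt_of_ne (by rintro rfl; norm_num at hxp)
  have hmono : log (x / p) ≤ log (y / p) :=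
    log_le_log (by linarith) (div_le_div_of_nonneg_right hxy hp.le)
  exact (mul_le_mul hxy hmono hlog.le (hx.trans hxy)).trans (le_max_left _ _)

theorem two_mul_mul_log_two_mul_div_le (hy : 0 ≤ y) (hp : 0 ≤ p) :
    2 * y * log (2 * y / p) ≤ 2 * (y * log (y / p)) + 2 * log 2 * y := by
  rcases hy.eq_or_lt with rfl | hy
  · simp
  rcases hp.eq_or_lt with rfl | hp
  · simp only [div_zero, log_zero, mul_zero, zero_add]
    have := log_nonneg one_le_two
    positivity
  rw [mul_div_assoc, log_mul two_ne_zero (by positivity)]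
  linarith

theorem abs_mul_log_div_le (hx : 0 ≤ x) (hxy : x ≤ 2 * y) (hp : 0 ≤ p) :
    |x * log (x / p)| ≤ 2 * max (y * log (y / p)) 0 + 2 * log 2 * y + p := by
  have hy : 0 ≤ y := by linarith
  have hbound : 0 ≤ 2 * max (y * log (y / p)) 0 + 2 * log 2 * y := by
    have := log_nonneg one_le_two
    positivity
  rw [abs_le]
  constructor
  · linarith [neg_le_mul_log_div hx hp]
  · calc x * log (x / p) ≤ max (2 * y * log (2 * y / p)) 0 := mul_log_div_le_max_of_le hx hxy hp
      _ ≤ 2 * max (y * log (y / p)) 0 + 2 * log 2 * y :=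
        max_le ((two_mul_mul_log_two_mul_div_le hy hp).trans
          (by linarith [le_max_left (y * log (y / p)) 0])) hbound
      _ ≤ _ := le_add_of_nonneg_right hp

end Real

namespace ENNReal

theorem ofReal_max_zero (r : ℝ) : ENNReal.ofReal (max r 0) = ENNReal.ofReal r := by
  rw [← toReal_ofReal', ofReal_toReal ofReal_ne_top]

theorem ofReal_toReal_mul {a : ℝ≥0∞} (ha : a ≠ ∞) (r : ℝ) :
    ENNReal.ofReal (a.toReal * r) = a * ENNReal.ofReal r := by
  rw [ofReal_mul toReal_nonneg, ofReal_toReal ha]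

theorem ofReal_add_sum_le {ι : Type*} (s : Finset ι) {a b : ℝ} {x : ι → ℝ} (ha : 0 ≤ a)
    (h : a + ∑ i ∈ s, x i ≤ b) :
    ENNReal.ofReal a + ∑ i ∈ s, ENNReal.ofReal (x i)
      ≤ ENNReal.ofReal b + ∑ i ∈ s, ENNReal.ofReal (-x i) := by
  have hsplit : ∑ i ∈ s, max (x i) 0 = ∑ i ∈ s, x i + ∑ i ∈ s, max (-x i) 0 := by
    rw [← Finset.sum_add_distrib]
    exact Finset.sum_congr rfl fun i _ => by linarith [max_zero_sub_max_neg_zero_eq_self (x i)]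
  calc ENNReal.ofReal a + ∑ i ∈ s, ENNReal.ofReal (x i)
      = ENNReal.ofReal (a + ∑ i ∈ s, max (x i) 0) := by
        rw [ofReal_add ha (Finset.sum_nonneg fun i _ => le_max_right _ _),
          ofReal_sum_of_nonneg fun i _ => le_max_right _ _]
        simp only [ofReal_max_zero]
    _ ≤ ENNReal.ofReal (b + ∑ i ∈ s, max (-x i) 0) := ofReal_le_ofReal (by linarith)
    _ ≤ ENNReal.ofReal b + ∑ i ∈ s, ENNReal.ofReal (-x i) := by
        refine ofReal_add_le.trans_eq ?_
        rw [ofReal_sum_of_nonneg fun i _ => le_max_right _ _]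
        simp only [ofReal_max_zero]

end ENNReal

theorem summable_and_mul_tsum_le {Y : Type*} {f : Y → ℝ} {n : ℕ} (hn : n ≠ 0) {c : ℝ}
    (hc : 0 ≤ c) (hneg : ∑' y, ENNReal.ofReal (-f y) ≠ ∞)
    (h : n * ∑' y, ENNReal.ofReal (f y) ≤ ENNReal.ofReal c + n * ∑' y, ENNReal.ofReal (-f y)) :
    Summable f ∧ n * ∑' y, f y ≤ c := by
  have hrhs : ENNReal.ofReal c + n * ∑' y, ENNReal.ofReal (-f y) ≠ ∞ :=
    ENNReal.add_ne_top.2 ⟨ENNReal.ofReal_ne_top, ENNReal.mul_ne_top (ENNReal.natCast_ne_top n) hneg⟩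
  have hpos : ∑' y, ENNReal.ofReal (f y) ≠ ∞ := by
    intro htop
    rw [htop, ENNReal.mul_top (by exact_mod_cast hn)] at h
    exact hrhs (top_le_iff.1 h)
  have hsplit : ∀ y, f y = (ENNReal.ofReal (f y)).toReal - (ENNReal.ofReal (-f y)).toReal :=
    fun y => by simp only [ENNReal.toReal_ofReal', max_zero_sub_max_neg_zero_eq_self]
  have hsumPos := ENNReal.summable_toReal hpos
  have hsumNeg := ENNReal.summable_toReal hneg
  refine ⟨(hsumPos.sub hsumNeg).congr fun y => (hsplit y).symm, ?_⟩
  have hreal := ENNReal.toReal_mono hrhs h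
  rw [ENNReal.toReal_add ENNReal.ofReal_ne_top (ENNReal.mul_ne_top (ENNReal.natCast_ne_top n) hneg),
    ENNReal.toReal_mul, ENNReal.toReal_mul, ENNReal.toReal_ofReal hc, ENNReal.toReal_natCast,
    ENNReal.tsum_toReal_eq fun _ => ENNReal.ofReal_ne_top,
    ENNReal.tsum_toReal_eq fun _ => ENNReal.ofReal_ne_top] at hreal
  rw [tsum_congr hsplit, hsumPos.tsum_sub hsumNeg, mul_sub]
  linarith

theorem mixPMF_apply {Y : Type*} (lam : ℝ≥0∞) (hlam : lam ≤ 1) (Q₁ Q₂ : PMF Y) (y : Y) :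
    mixPMF lam hlam Q₁ Q₂ y = lam * Q₁ y + (1 - lam) * Q₂ y := rfl

theorem mixPMF_bind {ι Y : Type*} (lam : ℝ≥0∞) (hlam : lam ≤ 1) (p q : PMF ι) (e : ι → PMF Y) :
    (mixPMF lam hlam p q).bind e = mixPMF lam hlam (p.bind e) (q.bind e) := by
  ext y
  simp only [PMF.bind_apply, mixPMF_apply, add_mul, mul_assoc]
  rw [ENNReal.tsum_add, ENNReal.tsum_mul_left, ENNReal.tsum_mul_left]

namespace PMF

variable {α β : Type*}

theorem apply_le_map_apply (p : PMF α) (f : α → β) (a : α) : p a ≤ p.map f (f a) := by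
  rw [map_apply]
  exact (if_pos rfl).symm.le.trans (ENNReal.le_tsum a)

theorem tsum_map_mul (p : PMF α) (f : α → β) (g : β → ℝ≥0∞) :
    ∑' b, p.map f b * g b = ∑' a, p a * g (f a) := by
  simp_rw [map_apply, ← ENNReal.tsum_mul_right, ite_mul, zero_mul]
  rw [ENNReal.tsum_comm]
  simp

theorem eq_mixPMF_pure_filter [DecidableEq α] {p : PMF α} {a : α} {S : Finset α} (ha : a ∉ S)
    (hp : p.support ⊆ ↑(insert a S)) (h : ∃ i ∈ (S : Set α), i ∈ p.support) :
    p = mixPMF (p a) (p.coe_le_one a) (pure a) (p.filter S h) := by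
  have hrest : ∑' i, (S : Set α).indicator p i = 1 - p a := by
    have hone := (p.toOuterMeasure_apply_eq_one_iff _).2 hp
    rw [toOuterMeasure_apply_finset, Finset.sum_insert ha] at hone
    rw [← toOuterMeasure_apply, toOuterMeasure_apply_finset, ← hone,
      ENNReal.add_sub_cancel_left (p.apply_ne_top a)]
  have hne : 1 - p a ≠ 0 := by
    obtain ⟨i, hiS, hi⟩ := h
    rw [← hrest]
    exact ENNReal.summable.tsum_ne_zero_iff.2 ⟨i, by simpa [hiS] using hi⟩
  ext i
  rw [mixPMF_apply, filter_apply, hrest, pure_apply]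
  by_cases hia : i = a
  · subst hia
    simp [ha]
  · rw [if_neg hia, mul_zero, zero_add, mul_comm, mul_assoc,
      ENNReal.inv_mul_cancel hne (ENNReal.sub_ne_top ENNReal.one_ne_top), mul_one]
    by_cases hiS : i ∈ S
    · simp [hiS]
    · rw [Set.indicator_of_notMem (by simpa using hiS), apply_eq_zero_iff]
      exact fun hi => (Finset.mem_insert.1 (hp hi)).elim hia hiS

theorem filter_bind_apply (p : PMF α) (T : Finset α) (h : ∃ i ∈ (T : Set α), i ∈ p.support)
    (e : α → PMF β) (y : β) :
    (p.filter T h).bind e y = (∑ i ∈ T, p i * e i y) / ∑ i ∈ T, p i := by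
  have hmass : ∑' i, (T : Set α).indicator p i = ∑ i ∈ T, p i := by
    rw [← toOuterMeasure_apply, toOuterMeasure_apply_finset]
  simp only [bind_apply, filter_apply, hmass, div_eq_mul_inv, mul_right_comm _ _ (e _ y)]
  rw [ENNReal.tsum_mul_right]
  congr 1
  rw [← Finset.tsum_subtype' T, tsum_subtype (T : Set α) fun i => p i * e i y]
  congr 1
  funext i
  by_cases hi : i ∈ (T : Set α) <;> simp [hi]

theorem tendsto_sum_mul_div_sum (p : PMF α) (e : α → PMF β) (y : β) :
    Tendsto (fun T : Finset α => (∑ i ∈ T, p i * e i y) / ∑ i ∈ T, p i) atTop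
      (𝓝 (p.bind e y)) := by
  have hnum : Tendsto (fun T : Finset α => ∑ i ∈ T, p i * e i y) atTop (𝓝 (p.bind e y)) :=
    ENNReal.summable.hasSum
  have hden : Tendsto (fun T : Finset α => ∑ i ∈ T, p i) atTop (𝓝 1) := p.2
  simpa using ENNReal.Tendsto.div hnum (.inr one_ne_zero) hden (.inl ENNReal.one_ne_top)

theorem eventually_sum_mul_div_sum_le (p : PMF α) (e : α → PMF β) :
    ∀ᶠ T : Finset α in atTop, ∀ y, (∑ i ∈ T, p i * e i y) / ∑ i ∈ T, p i ≤ 2 * p.bind e y := by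
  have hden : Tendsto (fun T : Finset α => ∑ i ∈ T, p i) atTop (𝓝 1) := p.2
  filter_upwards [hden.eventually (eventually_gt_nhds (by norm_num : (2⁻¹ : ℝ≥0∞) < 1))]
    with T hT y
  calc (∑ i ∈ T, p i * e i y) / ∑ i ∈ T, p i ≤ p.bind e y / 2⁻¹ :=
        ENNReal.div_le_div (ENNReal.sum_le_tsum T) hT.le
    _ = 2 * p.bind e y := by rw [div_eq_mul_inv, inv_inv, mul_comm]

end PMF

theorem IsConvexPMFSet.bind_mem {ι Y : Type*} {A : Set (PMF Y)} (hA : IsConvexPMFSet A)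
    {e : ι → PMF Y} (S : Finset ι) (p : PMF ι) (hp : p.support ⊆ S)
    (he : ∀ i ∈ p.support, e i ∈ A) : p.bind e ∈ A := by
  classical
  induction S using Finset.induction_on generalizing p with
  | empty =>
    obtain ⟨i, hi⟩ := p.support_nonempty
    simpa using hp hi
  | @insert a S ha ih =>
    by_cases ha0 : p a = 0
    · refine ih p (fun i hi => ?_) he
      rcases Finset.mem_insert.1 (hp hi) with rfl | hiS
      · exact absurd ha0 hi
      · exact hiS
    by_cases hS : ∃ i ∈ (S : Set ι), i ∈ p.support
    · rw [PMF.eq_mixPMF_pure_filter ha hp hS, mixPMF_bind, PMF.pure_bind]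
      refine hA _ (he a ha0) _ (ih _ ?_ fun i hi => he i ?_) _ _
      · rw [PMF.support_filter]; exact Set.inter_subset_left
      · rw [PMF.support_filter] at hi; exact hi.2
    · have hsupp : p.support = {a} := by
        refine Set.Subset.antisymm (fun i hi => ?_) (Set.singleton_subset_iff.2 ha0)
        rcases Finset.mem_insert.1 (hp hi) with rfl | hiS
        · rfl
        · exact absurd ⟨i, hiS, hi⟩ hS
      have hpure : p = PMF.pure a := by
        ext i
        by_cases hia : i = a
        · rw [hia, PMF.pure_apply_self, PMF.apply_eq_one_iff, hsupp]
        · rw [PMF.pure_apply_of_ne _ _ hia, PMF.apply_eq_zero_iff, hsupp]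
          exact hia
      rw [hpure, PMF.pure_bind]
      exact he a ha0

theorem tendsto_klDiv_of_le_two_mul {ι Y : Type*} {l : Filter ι} {Q : ι → PMF Y} {R P : PMF Y}
    (hlim : ∀ y, Tendsto (fun i => Q i y) l (𝓝 (R y)))
    (hle : ∀ᶠ i in l, ∀ y, Q i y ≤ 2 * R y)
    (hR : Summable fun y => (R y).toReal * Real.log ((R y).toReal / (P y).toReal)) :
    Tendsto (fun i => klDiv (Q i) P) l (𝓝 (klDiv R P)) := by
  refine tendsto_tsum_of_dominated_convergence (bound := fun y =>
    2 * max ((R y).toReal * Real.log ((R y).toReal / (P y).toReal)) 0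
      + 2 * Real.log 2 * (R y).toReal + (P y).toReal) ?_ (fun y => ?_) ?_
  · have hpos := hR.abs.of_nonneg_of_le (fun _ => le_max_right _ _)
      (fun _ => max_le (le_abs_self _) (abs_nonneg _))
    exact ((hpos.mul_left 2).add ((ENNReal.summable_toReal R.tsum_coe_ne_top).mul_left _)).add
      (ENNReal.summable_toReal P.tsum_coe_ne_top)
  · exact ((Real.continuous_mul_log_div _).tendsto _).comp
      ((ENNReal.tendsto_toReal (R.apply_ne_top y)).comp (hlim y))
  · filter_upwards [hle] with i hi y
    have hx : (Q i y).toReal ≤ 2 * (R y).toReal := by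
      simpa using ENNReal.toReal_mono (ENNReal.mul_ne_top ENNReal.ofNat_ne_top (R.apply_ne_top y))
        (hi y)
    rw [Real.norm_eq_abs]
    exact Real.abs_mul_log_div_le ENNReal.toReal_nonneg hx ENNReal.toReal_nonneg

theorem klDiv_le_klDiv_bind {ι Y : Type*} {A : Set (PMF Y)} (hA : IsConvexPMFSet A)
    {Q P : PMF Y} (hmin : ∀ R ∈ A, klDiv Q P ≤ klDiv R P) (p : PMF ι) (e : ι → PMF Y)
    (he : ∀ i ∈ p.support, e i ∈ A)
    (hsum : Summable fun y =>
      (p.bind e y).toReal * Real.log ((p.bind e y).toReal / (P y).toReal)) :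
    klDiv Q P ≤ klDiv (p.bind e) P := by
  classical
  obtain ⟨a, ha⟩ := p.support_nonempty
  -- Truncating to `insert a S` rather than `S` keeps every truncation a genuine distribution.
  have hT : ∀ S : Finset ι, ∃ i ∈ ((insert a S : Finset ι) : Set ι), i ∈ p.support :=
    fun S => ⟨a, by simp, ha⟩
  have hins : Tendsto (fun S : Finset ι => insert a S) atTop atTop :=
    tendsto_atTop_mono (fun S => Finset.subset_insert a S) tendsto_id
  refine ge_of_tendsto (tendsto_klDiv_of_le_two_mul (l := atTop)
    (Q := fun S => (p.filter _ (hT S)).bind e) (fun y => ?_) ?_ hsum)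
    (Eventually.of_forall fun S => hmin _ ?_)
  · simpa only [PMF.filter_bind_apply, Function.comp_def] using
      (p.tendsto_sum_mul_div_sum e y).comp hins
  · simpa only [PMF.filter_bind_apply] using hins.eventually (p.eventually_sum_mul_div_sum_le e)
  · refine hA.bind_mem (insert a S) _ ?_ fun i hi => he i ?_
    · rw [PMF.support_filter]; exact Set.inter_subset_left
    · rw [PMF.support_filter] at hi; exact hi.2

theorem tsum_ofReal_neg_mul_log_div_le_one {Y : Type*} (Q P : PMF Y) :
    ∑' y, ENNReal.ofReal (-((Q y).toReal * Real.log ((Q y).toReal / (P y).toReal))) ≤ 1 := by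
  rw [← P.tsum_coe]
  refine ENNReal.tsum_le_tsum fun y => (ENNReal.ofReal_le_ofReal (neg_le.1
    (Real.neg_le_mul_log_div ENNReal.toReal_nonneg ENNReal.toReal_nonneg))).trans_eq
    (ENNReal.ofReal_toReal (P.apply_ne_top y))

section Marginals

variable {X : Type*} {n : ℕ} {μ : PMF (Fin n → X)} {ω P : PMF X} {K : ℝ≥0∞}

theorem piPMF_apply (Q : PMF X) (Z : Fin n → X) : piPMF n Q Z = ∏ i, Q (Z i) := rfl

theorem toReal_piPMF (Q : PMF X) (Z : Fin n → X) :
    (piPMF n Q Z).toReal = ∏ i, (Q (Z i)).toReal := by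
  rw [piPMF_apply, ENNReal.toReal_prod]

theorem bind_empiricalPMF_of_map_eval_eq [NeZero n] (h : ∀ i, μ.map (fun Z => Z i) = ω) :
    μ.bind (empiricalPMF n) = ω := by
  change μ.bind (fun Z => (PMF.uniformOfFintype (Fin n)).map Z) = ω
  simp only [← PMF.bind_pure_comp]
  rw [PMF.bind_comm]
  exact (congrArg _ (funext h)).trans (PMF.bind_const _ _)

theorem tsum_sum_mul_eval (hω : ∀ i, μ.map (fun Z => Z i) = ω) (f : X → ℝ≥0∞) :
    ∑' Z, ∑ i, μ Z * f (Z i) = n * ∑' u, ω u * f u := by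
  rw [Summable.tsum_finsetSum fun _ _ => ENNReal.summable,
    Finset.sum_congr rfl fun i _ => by rw [← PMF.tsum_map_mul, hω i]]
  simp only [Finset.sum_const, Finset.card_univ, Fintype.card_fin, nsmul_eq_mul]

theorem mul_sum_log_div_le (hω : ∀ i, μ.map (fun Z => Z i) = ω) (hK : K ≠ ∞)
    (hμ : ∀ Z, μ Z ≤ K * piPMF n P Z) (Z : Fin n → X) :
    (μ Z).toReal * ∑ i, Real.log ((ω (Z i)).toReal / (P (Z i)).toReal)
      ≤ (μ Z).toReal * Real.log K.toReal - (μ Z).toReal + (piPMF n ω Z).toReal := by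
  by_cases hZ : μ Z = 0
  · simp [hZ]
  set m := (μ Z).toReal
  set W := (piPMF n ω Z).toReal
  set Pn := (piPMF n P Z).toReal
  have hm : 0 < m := ENNReal.toReal_pos hZ (μ.apply_ne_top Z)
  have hPn0 : piPMF n P Z ≠ 0 := fun h => hZ (le_zero_iff.1 (by simpa [h] using hμ Z))
  have hωi : ∀ i, 0 < (ω (Z i)).toReal := fun i => ENNReal.toReal_pos
    (ne_bot_of_le_ne_bot hZ (hω i ▸ μ.apply_le_map_apply (fun Z => Z i) Z)) (ω.apply_ne_top _)
  have hPi : ∀ i, 0 < (P (Z i)).toReal := fun i => ENNReal.toReal_pos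
    (Finset.prod_ne_zero_iff.1 (piPMF_apply P Z ▸ hPn0) i (Finset.mem_univ i)) (P.apply_ne_top _)
  have hW : 0 < W := by
    simp only [W, toReal_piPMF]; exact Finset.prod_pos fun i _ => hωi i
  have hPn : 0 < Pn := by
    simp only [Pn, toReal_piPMF]; exact Finset.prod_pos fun i _ => hPi i
  have hsum : ∑ i, Real.log ((ω (Z i)).toReal / (P (Z i)).toReal)
      = Real.log (m / Pn) - Real.log (m / W) := by
    rw [← Real.log_prod fun i _ => (div_pos (hωi i) (hPi i)).ne', Finset.prod_div_distrib,
      ← toReal_piPMF, ← toReal_piPMF, Real.log_div hm.ne' hPn.ne', Real.log_div hm.ne' hW.ne',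
      Real.log_div hW.ne' hPn.ne']
    ring
  have hratio : Real.log (m / Pn) ≤ Real.log K.toReal := by
    refine Real.log_le_log (div_pos hm hPn) ((div_le_iff₀ hPn).2 ?_)
    rw [← ENNReal.toReal_mul]
    exact ENNReal.toReal_mono (ENNReal.mul_ne_top hK ((piPMF n P).apply_ne_top Z)) (hμ Z)
  have hgibbs := Real.sub_le_mul_log_div hm.le hW
  rw [hsum, mul_sub]
  nlinarith [mul_le_mul_of_nonneg_left hratio hm.le]

theorem add_sum_mul_ofReal_log_div_le (hω : ∀ i, μ.map (fun Z => Z i) = ω) (hK : K ≠ ∞)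
    (hμ : ∀ Z, μ Z ≤ K * piPMF n P Z) (Z : Fin n → X) :
    μ Z + ∑ i, μ Z * ENNReal.ofReal (Real.log ((ω (Z i)).toReal / (P (Z i)).toReal))
      ≤ μ Z * ENNReal.ofReal (Real.log K.toReal) + piPMF n ω Z
        + ∑ i, μ Z * ENNReal.ofReal (-Real.log ((ω (Z i)).toReal / (P (Z i)).toReal)) := by
  have h := mul_sum_log_div_le hω hK hμ Z
  rw [Finset.mul_sum] at h
  have := ENNReal.ofReal_add_sum_le Finset.univ (ENNReal.toReal_nonneg (a := μ Z))
    (x := fun i => (μ Z).toReal * Real.log ((ω (Z i)).toReal / (P (Z i)).toReal))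
    (b := (μ Z).toReal * Real.log K.toReal + (piPMF n ω Z).toReal) (by linarith)
  simp only [← mul_neg, ENNReal.ofReal_toReal_mul (μ.apply_ne_top Z),
    ENNReal.ofReal_toReal (μ.apply_ne_top Z)] at this
  refine this.trans (add_le_add_left (ENNReal.ofReal_add_le.trans_eq ?_) _)
  rw [ENNReal.ofReal_toReal_mul (μ.apply_ne_top Z),
    ENNReal.ofReal_toReal ((piPMF n ω).apply_ne_top Z)]

theorem summable_and_mul_klDiv_le_log [NeZero n] (hω : ∀ i, μ.map (fun Z => Z i) = ω)
    (hK : K ≠ ∞) (hμ : ∀ Z, μ Z ≤ K * piPMF n P Z) :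
    (Summable fun u => (ω u).toReal * Real.log ((ω u).toReal / (P u).toReal)) ∧
      n * klDiv ω P ≤ Real.log K.toReal := by
  set φ : X → ℝ := fun u => Real.log ((ω u).toReal / (P u).toReal)
  have hK1 : 1 ≤ K := by
    calc 1 = ∑' Z, μ Z := μ.tsum_coe.symm
      _ ≤ ∑' Z, K * piPMF n P Z := ENNReal.tsum_le_tsum hμ
      _ = K := by rw [ENNReal.tsum_mul_left, (piPMF n P).tsum_coe, mul_one]
  have hlogK : 0 ≤ Real.log K.toReal :=
    Real.log_nonneg (by simpa using ENNReal.toReal_mono hK hK1)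
  have hsample : ∀ Z, μ Z + ∑ i, μ Z * ENNReal.ofReal (φ (Z i))
      ≤ μ Z * ENNReal.ofReal (Real.log K.toReal) + piPMF n ω Z
        + ∑ i, μ Z * ENNReal.ofReal (-φ (Z i)) :=
    add_sum_mul_ofReal_log_div_le hω hK hμ
  -- Summing in `ℝ≥0∞` needs no summability; it is recovered from the resulting bound.
  have htotal := ENNReal.tsum_le_tsum hsample
  rw [ENNReal.tsum_add, ENNReal.tsum_add, ENNReal.tsum_add, ENNReal.tsum_mul_right,
    tsum_sum_mul_eval hω fun u => ENNReal.ofReal (φ u),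
    tsum_sum_mul_eval hω fun u => ENNReal.ofReal (-φ u), μ.tsum_coe, (piPMF n ω).tsum_coe,
    one_mul, add_right_comm, add_comm _ 1, ENNReal.add_le_add_iff_left ENNReal.one_ne_top]
    at htotal
  simp only [← ENNReal.ofReal_toReal_mul (ω.apply_ne_top _), mul_neg] at htotal
  exact summable_and_mul_tsum_le (NeZero.ne n) hlogK
    (ne_top_of_le_ne_top ENNReal.one_ne_top (tsum_ofReal_neg_mul_log_div_le_one ω P)) htotal

end Marginals

theorem sanov_upper_bound_Iprojection_general {X : Type*}
    (n : ℕ) [NeZero n] (P : PMF X) (A : Set (PMF X))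
    (hA : 0 < probIn n P A)
    (hconv : IsConvexPMFSet A)
    (PAstar : PMF X)
    (hmin : ∀ Q ∈ A, klDiv PAstar P ≤ klDiv Q P)
    (μA : PMF (Fin n → X))
    (hμA : ∀ y : Fin n → X,
      μA y = (piPMF n P).toOuterMeasure ({y} ∩ {Z | empiricalPMF n Z ∈ A}) / probIn n P A)
    (ωA : PMF X)
    (hωA : ∀ i : Fin n, ωA = μA.map (fun Z => Z i)) :
    klDiv PAstar P ≤ klDiv ωA P ∧
    (1 / (n : ℝ)) * Real.log (probIn n P A).toReal ≤ - klDiv PAstar P := by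
  have hmarg : ∀ i, μA.map (fun Z => Z i) = ωA := fun i => (hωA i).symm
  have hdensity : ∀ Z, μA Z ≤ (probIn n P A)⁻¹ * piPMF n P Z := fun Z => by
    rw [hμA, div_eq_mul_inv, mul_comm, ← PMF.toOuterMeasure_apply_singleton]
    exact mul_le_mul_right ((piPMF n P).toOuterMeasure.mono Set.inter_subset_left) _
  have hsupp : ∀ Z ∈ μA.support, empiricalPMF n Z ∈ A := fun Z hZ => by
    by_contra hZA
    refine hZ ?_
    rw [hμA, Set.singleton_inter_eq_empty.2 (show Z ∉ {Z | empiricalPMF n Z ∈ A} from hZA),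
      MeasureTheory.measure_empty, ENNReal.zero_div]
  obtain ⟨hsum, hle⟩ :=
    summable_and_mul_klDiv_le_log hmarg (ENNReal.inv_ne_top.2 hA.ne') hdensity
  have hproj : klDiv PAstar P ≤ klDiv ωA P := by
    rw [← bind_empiricalPMF_of_map_eval_eq hmarg] at hsum ⊢
    exact klDiv_le_klDiv_bind hconv hmin μA _ hsupp hsum
  refine ⟨hproj, ?_⟩
  rw [ENNReal.toReal_inv, Real.log_inv] at hle
  have hn : (0 : ℝ) < n := Nat.cast_pos.2 (Nat.pos_of_ne_zero (NeZero.ne n))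
  rw [one_div, inv_mul_le_iff₀ hn]
  nlinarith [mul_le_mul_of_nonneg_left hproj hn.le]

/-- Theorem 3, part (1b): for convex `A` and an I-projection `P*_A` of `P` on
`A`, `D(P*_A ‖ P) ≤ D(ω_A ‖ P)`, and consequently
`(1/n) ln P(P̂_n ∈ A) ≤ - D(P*_A ‖ P)`. -/
theorem sanov_upper_bound_Iprojection {X : Type*} [Countable X] [MeasurableSpace X] [MeasurableSingletonClass X]
    (n : ℕ) [NeZero n] (P : PMF X) (A : Set (PMF X))
    (hA : 0 < probIn n P A)
    (hconv : IsConvexPMFSet A)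
    (PAstar : PMF X) (hmem : PAstar ∈ A)
    (hmin : ∀ Q ∈ A, klDiv PAstar P ≤ klDiv Q P)
    (μA : PMF (Fin n → X))
    (hμA : ∀ y : Fin n → X,
      μA y = (piPMF n P).toOuterMeasure ({y} ∩ {Z | empiricalPMF n Z ∈ A}) / probIn n P A)
    (ωA : PMF X)
    (hωA : ∀ i : Fin n, ωA = μA.map (fun Z => Z i)) :
    klDiv PAstar P ≤ klDiv ωA P ∧
    (1 / (n : ℝ)) * Real.log (probIn n P A).toReal ≤ - klDiv PAstar P :=
  sanov_upper_bound_Iprojection_general n P A hA hconv PAstar hmin μA hμA ωA hωA
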